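/- arXiv:math/0611928 — 4 statements merged into one kernel-verified Lean document; each statement's English description precedes it below -/
import Mathlib

section
/- Let f be holomorphic on a neighborhood of the closed disk of radius R centered at 0, let z_0,...,z_n be points in the closed disk of radius r < R, and let L_n f be the Lagrange interpolating polynomial of f at these points (with multiplicity). Then for any 0 < s < R, the maximum of |f - L_n f| on the circle of radius s is at most M(R,f) * (R/(R-s)) * ((s+r)/(R-r))^{n+1}, where M(R,f) is the maximum of |f| on the circle of radius R. -/
/-!
Write `f - L = ω h` with `ω t = ∏ (t - zᵢ)`. Cauchy's formula for `h` at `w` on the circle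
`|t| = R` splits into `∮ f / ((t - w) ω)` and `∮ L / ((t - w) ω)`. The second integral vanishes:
its integrand is holomorphic outside the disk and `O(1/t²)` at infinity, so the circle can be
pushed off to infinity. Hence `|h w| ≤ R M / ((R - s) (R - r)ⁿ⁺¹)`, while `|ω w| ≤ (s + r)ⁿ⁺¹`.
-/

open Metric Complex Filter Polynomial Bornology Real Set Topology

theorem circleIntegral_eq_zero_of_tendsto_sub_mul_cobounded {g : ℂ → ℂ} {c : ℂ} {a R : ℝ}
    (hR : 0 < R) (haR : a < R) (hg : DifferentiableOn ℂ g (closedBall c a)ᶜ)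
    (hlim : Tendsto (fun t => (t - c) * g t) (cobounded ℂ) (𝓝 0)) :
    ∮ t in C(c, R), g t = 0 := by
  have hdiff : ∀ t, R ≤ dist t c → DifferentiableAt ℂ g t := fun t ht =>
    hg.differentiableAt <| isClosed_closedBall.isOpen_compl.mem_nhds <| by
      simpa only [mem_compl_iff, mem_closedBall, not_le] using haR.trans_le ht
  have hradius : ∀ ρ, R ≤ ρ → ∮ t in C(c, ρ), g t = ∮ t in C(c, R), g t := fun ρ hρ =>
    circleIntegral_eq_of_differentiable_on_annulus_off_countable hR hρ countable_empty
      (fun t ht => (hdiff t (not_lt.1 ht.2)).continuousAt.continuousWithinAt)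
      (fun t ht => hdiff t (not_le.1 ht.1.2).le)
  refine norm_le_zero_iff.1 (le_of_forall_pos_le_add fun ε hε => ?_)
  obtain ⟨ρ₀, hρ₀⟩ : ∃ ρ₀, ∀ t, ρ₀ ≤ dist t c → ‖(t - c) * g t‖ ≤ ε / (2 * π) := by
    have := hlim.eventually (closedBall_mem_nhds (0 : ℂ) (by positivity : 0 < ε / (2 * π)))
    rw [← comap_dist_right_atTop c, (atTop_basis.comap _).eventually_iff] at this
    obtain ⟨ρ₀, -, hρ₀⟩ := this
    exact ⟨ρ₀, fun t ht => mem_closedBall_zero_iff.1 (hρ₀ ht)⟩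
  set ρ := max R ρ₀
  have hρ : 0 < ρ := hR.trans_le (le_max_left _ _)
  rw [zero_add, ← hradius ρ (le_max_left _ _)]
  calc ‖∮ t in C(c, ρ), g t‖ ≤ 2 * π * ρ * (ε / (2 * π) / ρ) :=
        circleIntegral.norm_integral_le_of_norm_le_const hρ.le fun t ht => by
          have hdist : dist t c = ρ := ht
          rw [le_div_iff₀ hρ, ← hdist, dist_eq_norm, mul_comm, ← norm_mul]
          exact hρ₀ t (hdist.symm ▸ le_max_right _ _)
    _ = ε := by field_simp

theorem circleIntegral_eval_div_eval_eq_zero {P Q : ℂ[X]} {a R : ℝ} (hR : 0 < R) (haR : a < R)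
    (hQ : ∀ t, a < ‖t‖ → Q.eval t ≠ 0) (hPQ : P.natDegree + 2 ≤ Q.natDegree) :
    ∮ t in C(0, R), P.eval t / Q.eval t = 0 := by
  refine circleIntegral_eq_zero_of_tendsto_sub_mul_cobounded hR haR ?_ ?_
  · intro t ht
    have ht' : a < ‖t‖ := by simpa using ht
    exact (P.differentiableAt.div Q.differentiableAt (hQ t ht')).differentiableWithinAt
  · have hdeg : (X * P).degree < Q.degree :=
      degree_lt_degree <| natDegree_mul_le.trans_lt <| by
        have := natDegree_X_le (R := ℂ)
        omega
    simpa only [sub_zero, eval_mul, eval_X, mul_div_assoc] using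
      (isLittleO_cobounded_of_degree_lt hdeg).tendsto_div_nhds_zero

section

variable {ι : Type*} [Fintype ι] {z : ι → ℂ} {r : ℝ}

theorem norm_prod_sub_le_pow (hz : ∀ i, ‖z i‖ ≤ r) (w : ℂ) :
    ‖∏ i, (w - z i)‖ ≤ (‖w‖ + r) ^ Fintype.card ι := by
  rw [norm_prod, ← Finset.card_univ, ← Finset.prod_const]
  exact Finset.prod_le_prod (fun _ _ => norm_nonneg _) fun i _ =>
    (norm_sub_le _ _).trans (by linarith [hz i])

theorem pow_le_norm_prod_sub (hz : ∀ i, ‖z i‖ ≤ r) {t : ℂ} (ht : r ≤ ‖t‖) :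
    (‖t‖ - r) ^ Fintype.card ι ≤ ‖∏ i, (t - z i)‖ := by
  rw [norm_prod, ← Finset.card_univ, ← Finset.prod_const]
  exact Finset.prod_le_prod (fun _ _ => sub_nonneg.2 ht) fun i _ => by
    linarith [hz i, norm_sub_norm_le t (z i)]

theorem eq_two_pi_I_inv_smul_circleIntegral_div_prod_sub {f h : ℂ → ℂ} {L : ℂ[X]} {R : ℝ}
    {w : ℂ} (hz : ∀ i, ‖z i‖ ≤ r) (hrR : r < R) (hw : ‖w‖ < R)
    (hL : L.natDegree < Fintype.card ι) (hf : ContinuousOn f (sphere 0 R))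
    (hh : DifferentiableOn ℂ h (closedBall 0 R))
    (hfact : ∀ t ∈ sphere (0 : ℂ) R, f t - L.eval t = (∏ i, (t - z i)) * h t) :
    h w = (2 * π * I)⁻¹ • ∮ t in C(0, R), f t / ((t - w) * ∏ i, (t - z i)) := by
  have hR : 0 < R := (norm_nonneg w).trans_lt hw
  set Q : ℂ[X] := (X - C w) * ∏ i, (X - C (z i))
  have hQeval : ∀ t, Q.eval t = (t - w) * ∏ i, (t - z i) := by simp [Q, eval_prod]
  have hQ : ∀ t, max r ‖w‖ < ‖t‖ → Q.eval t ≠ 0 := by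
    intro t ht
    rw [hQeval]
    refine mul_ne_zero (sub_ne_zero.2 ?_) (Finset.prod_ne_zero_iff.2 fun i _ => sub_ne_zero.2 ?_)
    all_goals rintro rfl
    · exact ht.not_ge (le_max_right _ _)
    · exact ht.not_ge ((hz i).trans (le_max_left _ _))
  have hQR : ∀ t ∈ sphere (0 : ℂ) R, Q.eval t ≠ 0 := fun t ht =>
    hQ t (by rw [mem_sphere_zero_iff_norm.1 ht]; exact max_lt hrR hw)
  have hLQ : ∮ t in C(0, R), L.eval t / Q.eval t = 0 := by
    refine circleIntegral_eval_div_eval_eq_zero hR (max_lt hrR hw) hQ ?_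
    rw [(monic_X_sub_C w).natDegree_mul (monic_prod_of_monic _ _ fun i _ => monic_X_sub_C (z i)),
      natDegree_X_sub_C, natDegree_finsetProd_X_sub_C_eq_card, Finset.card_univ]
    omega
  have hsplit : EqOn (fun t => (t - w)⁻¹ • h t) (fun t => f t / Q.eval t - L.eval t / Q.eval t)
      (sphere 0 R) := by
    intro t ht
    have hQt := hQR t ht
    show (t - w)⁻¹ • h t = f t / Q.eval t - L.eval t / Q.eval t
    rw [hQeval] at hQt ⊢
    rw [← sub_div, hfact t ht, smul_eq_mul]
    field_simp [(mul_ne_zero_iff.1 hQt).2]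
  calc h w = (2 * π * I)⁻¹ • ∮ t in C(0, R), (t - w)⁻¹ • h t := by
        rw [hh.circleIntegral_sub_inv_smul (mem_ball_zero_iff.2 hw), smul_smul,
          inv_mul_cancel₀ two_pi_I_ne_zero, one_smul]
    _ = (2 * π * I)⁻¹ • ∮ t in C(0, R), f t / ((t - w) * ∏ i, (t - z i)) := by
        rw [circleIntegral.integral_congr hR.le hsplit, circleIntegral.integral_sub, hLQ, sub_zero]
        · simp only [hQeval]
        · exact (hf.div Q.continuous.continuousOn hQR).circleIntegrable hR.le
        · exact (L.continuous.continuousOn.div Q.continuous.continuousOn hQR).circleIntegrable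
            hR.le

theorem norm_sub_eval_le_of_eq_prod_sub_mul {f h : ℂ → ℂ} {L : ℂ[X]} {R M : ℝ} {w : ℂ}
    (hz : ∀ i, ‖z i‖ ≤ r) (hrR : r < R) (hw : ‖w‖ < R)
    (hL : L.natDegree < Fintype.card ι) (hf : ContinuousOn f (sphere 0 R))
    (hh : DifferentiableOn ℂ h (closedBall 0 R))
    (hfact : ∀ t ∈ closedBall (0 : ℂ) R, f t - L.eval t = (∏ i, (t - z i)) * h t)
    (hM : ∀ t ∈ sphere (0 : ℂ) R, ‖f t‖ ≤ M) :
    ‖f w - L.eval w‖ ≤ M * (R / (R - ‖w‖)) * ((‖w‖ + r) / (R - r)) ^ Fintype.card ι := by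
  have hR : 0 < R := (norm_nonneg w).trans_lt hw
  have hRw : 0 < R - ‖w‖ := sub_pos.2 hw
  have hRr : 0 < R - r := sub_pos.2 hrR
  have hhw : ‖h w‖ ≤ R * (M / ((R - ‖w‖) * (R - r) ^ Fintype.card ι)) := by
    rw [eq_two_pi_I_inv_smul_circleIntegral_div_prod_sub hz hrR hw hL hf hh
      fun t ht => hfact t (sphere_subset_closedBall ht)]
    refine circleIntegral.norm_two_pi_i_inv_smul_integral_le_of_norm_le_const hR.le fun t ht => ?_
    have htR : ‖t‖ = R := mem_sphere_zero_iff_norm.1 ht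
    have hprod := pow_le_norm_prod_sub hz (htR ▸ hrR.le)
    rw [htR] at hprod
    rw [norm_div, norm_mul]
    refine div_le_div₀ ((norm_nonneg _).trans (hM t ht)) (hM t ht) (by positivity)
      (mul_le_mul ?_ hprod (by positivity) (norm_nonneg _))
    linarith [norm_sub_norm_le t w]
  have hprod := norm_prod_sub_le_pow hz w
  rw [hfact w (ball_subset_closedBall (mem_ball_zero_iff.2 hw)), norm_mul]
  calc ‖∏ i, (w - z i)‖ * ‖h w‖
      ≤ (‖w‖ + r) ^ Fintype.card ι * (R * (M / ((R - ‖w‖) * (R - r) ^ Fintype.card ι))) :=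
        mul_le_mul hprod hhw (norm_nonneg _) ((norm_nonneg _).trans hprod)
    _ = M * (R / (R - ‖w‖)) * ((‖w‖ + r) / (R - r)) ^ Fintype.card ι := by
        rw [div_pow]
        field_simp

end

theorem stmt_0_general (f : ℂ → ℂ) (R r s : ℝ) (n : ℕ) (hrR : r < R) (hsR : s < R)
    (U : Set ℂ) (hUR : closedBall (0 : ℂ) R ⊆ U)
    (hf : DifferentiableOn ℂ f U)
    (z : Fin (n + 1) → ℂ) (hz : ∀ i, z i ∈ closedBall (0 : ℂ) r)
    (L : Polynomial ℂ) (hL : L.degree ≤ (n : ℕ))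
    (h : ℂ → ℂ) (hh : DifferentiableOn ℂ h U)
    (hfact : ∀ w ∈ U, f w - L.eval w = (∏ i, (w - z i)) * h w) :
    ∀ w ∈ sphere (0 : ℂ) s,
      ‖f w - L.eval w‖ ≤
        sSup ((fun ζ => ‖f ζ‖) '' sphere (0 : ℂ) R) * (R / (R - s)) *
          ((s + r) / (R - r)) ^ (n + 1) := by
  intro w hw
  have hws : ‖w‖ = s := mem_sphere_zero_iff_norm.1 hw
  have hfR : ContinuousOn f (sphere 0 R) :=
    hf.continuousOn.mono (sphere_subset_closedBall.trans hUR)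
  have hM : ∀ t ∈ sphere (0 : ℂ) R, ‖f t‖ ≤ sSup ((fun ζ => ‖f ζ‖) '' sphere (0 : ℂ) R) :=
    fun t ht => le_csSup ((isCompact_sphere 0 R).image_of_continuousOn hfR.norm).bddAbove
      (mem_image_of_mem _ ht)
  rw [← hws, ← Fintype.card_fin (n + 1)]
  exact norm_sub_eval_le_of_eq_prod_sub_mul (fun i => mem_closedBall_zero_iff.1 (hz i)) hrR
    (hws ▸ hsR) (by simpa using Nat.lt_succ_of_le (natDegree_le_of_degree_le hL)) hfR
    (hh.mono hUR) (fun t ht => hfact t (hUR ht)) hM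

/-- Lagrange interpolation error estimate: if `f` is holomorphic on a neighborhood `U` of
the closed disk of radius `R`, `z₀,…,zₙ` lie in the closed disk of radius `r < R`, and
`L` is the Lagrange interpolating polynomial of `f` at these points with multiplicity
(i.e. `deg L ≤ n` and `f - L` is divisible by `∏ (z - zᵢ)` in the holomorphic functions
on `U`), then for `0 < s < R` and `|z| = s`,
`|f z - L z| ≤ M(R,f) · (R/(R-s)) · ((s+r)/(R-r))^{n+1}`. -/
theorem stmt_0 (f : ℂ → ℂ) (R r s : ℝ) (n : ℕ) (hr0 : 0 ≤ r) (hrR : r < R)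
    (hs0 : 0 < s) (hsR : s < R)
    (U : Set ℂ) (hU : IsOpen U) (hUR : closedBall (0 : ℂ) R ⊆ U)
    (hf : DifferentiableOn ℂ f U)
    (z : Fin (n + 1) → ℂ) (hz : ∀ i, z i ∈ closedBall (0 : ℂ) r)
    (L : Polynomial ℂ) (hL : L.degree ≤ (n : ℕ))
    (h : ℂ → ℂ) (hh : DifferentiableOn ℂ h U)
    (hfact : ∀ w ∈ U, f w - L.eval w = (∏ i, (w - z i)) * h w) :
    ∀ w ∈ sphere (0 : ℂ) s,
      ‖f w - L.eval w‖ ≤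
        sSup ((fun ζ => ‖f ζ‖) '' sphere (0 : ℂ) R) * (R / (R - s)) *
          ((s + r) / (R - r)) ^ (n + 1) :=
  stmt_0_general f R r s n hrR hsR U hUR hf z hz L hL h hh hfact
end

section
/- Let f be a germ of a holomorphic function at the origin and m a natural number. If for all n ≥ k there exist rational functions R_n = P_n/Q_n with deg P_n ≤ n, deg Q_n ≤ m, Q_n ≠ 0, such that f - R_n vanishes to order at least n + m + 2 at the origin, then f itself equals a rational function P/Q with deg P ≤ k and deg Q ≤ m. -/
/-!
Consecutive approximants `Pₙ/Qₙ` and `Pₙ₊₁/Qₙ₊₁` coincide: the cross difference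
`Qₙ₊₁ Pₙ - Qₙ Pₙ₊₁ = Qₙ (Qₙ₊₁ f - Pₙ₊₁) - Qₙ₊₁ (Qₙ f - Pₙ)` is a polynomial of degree
`≤ n + m + 1` divisible by `X ^ (n + m + 2)`, hence zero. So every `Pₙ/Qₙ` equals `P_k/Q_k`,
and then `Qₙ (Q_k f - P_k) = Q_k (Qₙ f - Pₙ)` vanishes to order `n + m + 2`. As `Qₙ` vanishes
to order at most `m`, the series `Q_k f - P_k` vanishes to every order.
-/

open PowerSeries
open scoped Polynomial

variable {R : Type*}

theorem PowerSeries.X_pow_dvd_iff_le_order [Semiring R] {n : ℕ} {φ : R⟦X⟧} :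
    X ^ n ∣ φ ↔ (n : ℕ∞) ≤ φ.order := by
  rw [order_eq_emultiplicity_X, pow_dvd_iff_le_emultiplicity]

theorem Polynomial.order_coe_le_natDegree [Semiring R] {p : R[X]} (hp : p ≠ 0) :
    (p : R⟦X⟧).order ≤ p.natDegree :=
  PowerSeries.order_le _ <| by
    rwa [Polynomial.coeff_coe, Polynomial.coeff_natDegree, Polynomial.leadingCoeff_ne_zero]

theorem Polynomial.eq_zero_of_X_pow_dvd_coe_of_degree_lt [Semiring R] {p : R[X]} {n : ℕ}
    (hdvd : PowerSeries.X ^ n ∣ (p : R⟦X⟧)) (hdeg : p.degree < n) : p = 0 := by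
  ext d
  rcases lt_or_ge d n with hd | hd
  · rw [Polynomial.coeff_zero]
    simpa only [Polynomial.coeff_coe] using PowerSeries.X_pow_dvd_iff.mp hdvd d hd
  · exact Polynomial.coeff_eq_zero_of_degree_lt (hdeg.trans_le (by exact_mod_cast hd))

theorem PowerSeries.X_pow_dvd_of_X_pow_dvd_coe_mul [CommRing R] [IsDomain R] {Q : R[X]}
    {g : R⟦X⟧} {n m : ℕ} (hQ0 : Q ≠ 0) (hQ : Q.natDegree ≤ m)
    (hdvd : X ^ (n + m) ∣ (Q : R⟦X⟧) * g) : X ^ n ∣ g := by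
  rw [X_pow_dvd_iff_le_order, order_mul] at *
  have hQm : (Q : R⟦X⟧).order ≤ m :=
    (Polynomial.order_coe_le_natDegree hQ0).trans (by exact_mod_cast hQ)
  rw [← ENat.add_le_add_iff_right (ENat.natCast_ne_top m)]
  calc ((n + m : ℕ) : ℕ∞) ≤ (Q : R⟦X⟧).order + g.order := hdvd
    _ ≤ m + g.order := by gcongr
    _ = g.order + m := add_comm _ _

theorem Polynomial.cross_mul_eq_of_X_pow_dvd [CommRing R] {f : R⟦X⟧} {P Q P' Q' : R[X]}
    {n m : ℕ} (hP : P.degree ≤ n) (hQ : Q.degree ≤ m) (hP' : P'.degree ≤ (n + 1 : ℕ))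
    (hQ' : Q'.degree ≤ m) (h : PowerSeries.X ^ (n + m + 2) ∣ (Q : R⟦X⟧) * f - (P : R⟦X⟧))
    (h' : PowerSeries.X ^ (n + m + 2) ∣ (Q' : R⟦X⟧) * f - (P' : R⟦X⟧)) :
    Q' * P = Q * P' := by
  rw [← sub_eq_zero]
  apply eq_zero_of_X_pow_dvd_coe_of_degree_lt (n := n + m + 2)
  · have hcoe : ((Q' * P - Q * P' : R[X]) : R⟦X⟧) =
        (Q : R⟦X⟧) * ((Q' : R⟦X⟧) * f - (P' : R⟦X⟧)) -
          (Q' : R⟦X⟧) * ((Q : R⟦X⟧) * f - (P : R⟦X⟧)) := by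
      push_cast
      ring
    rw [hcoe]
    exact dvd_sub (h'.mul_left _) (h.mul_left _)
  · refine (degree_sub_le_of_le (degree_mul_le_of_le hQ' hP)
      (degree_mul_le_of_le hQ hP')).trans_lt (max_lt ?_ ?_) <;> norm_cast <;> omega

theorem mul_eq_mul_of_forall_mul_succ_eq [CommMonoidWithZero R] [IsCancelMulZero R]
    {P Q : ℕ → R} (hQ : ∀ t, Q t ≠ 0) (h : ∀ t, Q (t + 1) * P t = Q t * P (t + 1)) (t : ℕ) :
    Q 0 * P t = Q t * P 0 := by
  induction t with
  | zero => rfl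
  | succ t ih =>
    apply mul_left_cancel₀ (hQ t)
    calc Q t * (Q 0 * P (t + 1)) = Q 0 * (Q t * P (t + 1)) := mul_left_comm _ _ _
      _ = Q (t + 1) * (Q 0 * P t) := by rw [← h t, mul_left_comm]
      _ = Q t * (Q (t + 1) * P 0) := by rw [ih, mul_left_comm]

/-- Padé overinterpolation: if `f` is a holomorphic germ at the origin (viewed via its
power series) and for every `n ≥ k` there are polynomials `Pₙ, Qₙ` with `deg Pₙ ≤ n`,
`deg Qₙ ≤ m`, `Qₙ ≠ 0`, such that `Qₙ f - Pₙ` vanishes to order at least `n + m + 2`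
at the origin, then `f` equals a rational function `P/Q` with `deg P ≤ k`, `deg Q ≤ m`. -/
theorem stmt_1 (f : PowerSeries ℂ) (k m : ℕ)
    (h : ∀ n : ℕ, k ≤ n → ∃ P Q : Polynomial ℂ, P.degree ≤ (n : ℕ) ∧
      Q.degree ≤ (m : ℕ) ∧ Q ≠ 0 ∧
      ∀ j : ℕ, j < n + m + 2 → (PowerSeries.coeff j) ((Q : PowerSeries ℂ) * f - (P : PowerSeries ℂ)) = 0) :
    ∃ P Q : Polynomial ℂ, P.degree ≤ (k : ℕ) ∧ Q.degree ≤ (m : ℕ) ∧ Q ≠ 0 ∧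
      (Q : PowerSeries ℂ) * f = (P : PowerSeries ℂ) := by
  choose P Q hP hQ hQ0 hv using fun t : ℕ => h (k + t) (Nat.le_add_right k t)
  have hdvd (t : ℕ) : X ^ (k + t + m + 2) ∣ (Q t : ℂ⟦X⟧) * f - (P t : ℂ⟦X⟧) :=
    PowerSeries.X_pow_dvd_iff.mpr (hv t)
  have hcross (t : ℕ) : Q (t + 1) * P t = Q t * P (t + 1) :=
    Polynomial.cross_mul_eq_of_X_pow_dvd (hP t) (hQ t) (hP (t + 1)) (hQ (t + 1)) (hdvd t)
      ((pow_dvd_pow _ (by omega)).trans (hdvd (t + 1)))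
  refine ⟨P 0, Q 0, by simpa using hP 0, hQ 0, hQ0 0, ?_⟩
  have hall (t : ℕ) : X ^ t ∣ (Q 0 : ℂ⟦X⟧) * f - (P 0 : ℂ⟦X⟧) := by
    refine X_pow_dvd_of_X_pow_dvd_coe_mul (hQ0 t)
      (Polynomial.natDegree_le_of_degree_le (hQ t)) ?_
    have hsame : ((Q 0 * P t : ℂ[X]) : ℂ⟦X⟧) = ((Q t * P 0 : ℂ[X]) : ℂ⟦X⟧) := by
      rw [mul_eq_mul_of_forall_mul_succ_eq hQ0 hcross t]
    push_cast at hsame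
    rw [show (Q t : ℂ⟦X⟧) * ((Q 0 : ℂ⟦X⟧) * f - (P 0 : ℂ⟦X⟧)) =
        (Q 0 : ℂ⟦X⟧) * ((Q t : ℂ⟦X⟧) * f - (P t : ℂ⟦X⟧)) by linear_combination hsame]
    exact ((pow_dvd_pow _ (by omega)).trans (hdvd t)).mul_left _
  rw [← sub_eq_zero]
  ext t
  simpa using PowerSeries.X_pow_dvd_iff.mp (hall (t + 1)) t (lt_add_one t)
end

section
/- Let S be an infinite subset of ℂ² such that there exist constants A ≥ 1 and 1 ≤ α < 2 with |S ∩ X| ≤ A·(deg X)^α for every algebraic curve X not containing S. Then S is contained in an irreducible algebraic curve Γ of degree at most (2A)^{1/(2-α)}, and consequently |S ∩ X| ≤ (2A)^{1/(2-α)}·deg X for every algebraic curve X not containing S. -/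
/-!
Through any `((n + 2).choose 2) - 1 = (n² + 3n)/2` points of `S` passes a nonzero polynomial of
degree at most `n`. If it does not vanish on all of `S`, the incidence bound gives
`(n² + 3n)/2 ≤ A n^α`, hence `(n + 1)^(2 - α) ≤ 2A` by Bernoulli's inequality. So the least degree
`m` of a nonzero polynomial vanishing on `S` satisfies `m ≤ (2A)^(1/(2-α))`, and a polynomial of
least degree is irreducible: a factor of smaller degree misses `S`, so meets it in finitely many
points, and `S` is infinite.

The second claim is the weak Bézout bound for `Γ = {g = 0}` and `X = {p = 0}`. With `P_j` the
polynomials of degree at most `j`, `m = deg g`, `d = deg p` and `k` common zeros, the space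
`g P_{d+k} + p P_{m+k} ⊆ P_{m+d+k}` has dimension at least
`C(d+k+2, 2) + C(m+k+2, 2) - C(k+2, 2)` (the intersection is `gp P_k` since `g, p` are coprime)
and lies in the kernel of evaluation at the common zeros, which has codimension `k` by
interpolation. Comparing the two counts gives `k ≤ m d`.
-/

open MvPolynomial Module Finset

section LinearAlgebra

variable {K V F : Type*} [Field K] [AddCommGroup V] [Module K V] [AddCommGroup F] [Module K F]

theorem Submodule.finrank_add_finrank_le_of_le_ker {U W : Submodule K V} [FiniteDimensional K W]
    (f : V →ₗ[K] F) (hUW : U ≤ W) (hUf : U ≤ LinearMap.ker f) (hWf : W.map f = ⊤) :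
    finrank K U + finrank K F ≤ finrank K W := by
  have hrank := LinearMap.finrank_range_add_finrank_ker (f.domRestrict W)
  rw [LinearMap.range_domRestrict, hWf, finrank_top, LinearMap.ker_domRestrict] at hrank
  have hU : finrank K U ≤ finrank K (Submodule.comap W.subtype (LinearMap.ker f)) := by
    rw [← (Submodule.comapSubtypeEquivOfLe hUW).finrank_eq]
    exact Submodule.finrank_mono (Submodule.comap_mono hUf)
  omega

end LinearAlgebra

section Polynomials

variable {K σ ι : Type*} [Field K]

theorem totalDegree_pos_of_eval_eq_zero {p : MvPolynomial σ K} (hp : p ≠ 0)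
    {x : σ → K} (hx : eval x p = 0) : 0 < p.totalDegree := by
  refine Nat.pos_of_ne_zero fun h => hp ?_
  rw [totalDegree_eq_zero_iff_eq_C.mp h, eval_C] at hx
  rw [totalDegree_eq_zero_iff_eq_C.mp h, hx, map_zero]

theorem totalDegree_pos_of_not_isUnit {p : MvPolynomial σ K} (hp : p ≠ 0)
    (hu : ¬ IsUnit p) : 0 < p.totalDegree := by
  refine Nat.pos_of_ne_zero fun h => hu ?_
  rw [totalDegree_eq_zero_iff_eq_C.mp h] at hp ⊢
  exact (isUnit_iff_ne_zero.mpr fun h0 => hp (by rw [h0, map_zero])).map C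

variable (σ) in
theorem finrank_restrictTotalDegree [Fintype σ] [Nonempty σ] (N : ℕ) :
    finrank K (restrictTotalDegree σ K N) = (N + Fintype.card σ).choose (Fintype.card σ) := by
  classical
  obtain ⟨k, hk⟩ : ∃ k, Fintype.card σ = k + 1 := Nat.exists_eq_succ_of_ne_zero Fintype.card_ne_zero
  have hset : {s : σ →₀ ℕ | (s.sum fun _ e => e) ≤ N} =
      ↑((range (N + 1)).biUnion fun j => finsuppAntidiag (univ : Finset σ) j) := by
    ext s
    simp [Finsupp.sum_fintype]
  rw [restrictTotalDegree, finrank_eq_nat_card_basis (basisRestrictSupport K _), hset,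
    Nat.card_coe_set_eq, Set.ncard_coe_finset, card_biUnion, hk]
  · simp_rw [card_finsuppAntidiag_nat_eq_choose, card_univ, hk]
    rw [← add_assoc, ← Nat.sum_range_add_choose]
    refine sum_congr rfl fun j _ => ?_
    rw [show k + 1 + j - 1 = j + k by omega, Nat.choose_symm_add]
  · intro i _ j _ hij
    exact disjoint_left.mpr fun s hi hj => hij ((mem_finsuppAntidiag.mp hi).1.symm.trans
      (mem_finsuppAntidiag.mp hj).1)

noncomputable def evalAtₗ (v : ι → σ → K) : MvPolynomial σ K →ₗ[K] ι → K :=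
  LinearMap.funLeft K K v ∘ₗ evalₗ K σ

@[simp]
theorem evalAtₗ_apply (v : ι → σ → K) (p : MvPolynomial σ K) (i : ι) :
    evalAtₗ v p i = eval (v i) p :=
  rfl

theorem exists_totalDegree_le_one_eval_eq_one_eval_eq_zero {x y : σ → K} (hxy : x ≠ y) :
    ∃ ℓ : MvPolynomial σ K, ℓ.totalDegree ≤ 1 ∧ eval x ℓ = 1 ∧ eval y ℓ = 0 := by
  obtain ⟨c, hc⟩ := Function.ne_iff.mp hxy
  refine ⟨(x c - y c)⁻¹ • (X c - C (y c)), ?_, ?_, ?_⟩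
  · refine (totalDegree_smul_le _ _).trans ((totalDegree_sub_C_le _ _).trans ?_)
    rw [totalDegree_X]
  · simp [inv_mul_cancel₀ (sub_ne_zero.mpr hc)]
  · simp

theorem exists_totalDegree_le_eval_eq_ite [Fintype ι] [DecidableEq ι] {v : ι → σ → K}
    (hv : Function.Injective v) (i : ι) :
    ∃ f : MvPolynomial σ K, f.totalDegree ≤ Fintype.card ι - 1 ∧
      ∀ j, eval (v j) f = if j = i then 1 else 0 := by
  have hsep : ∀ j, ∃ ℓ : MvPolynomial σ K, ℓ.totalDegree ≤ 1 ∧ eval (v i) ℓ = 1 ∧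
      (j ≠ i → eval (v j) ℓ = 0) := by
    intro j
    by_cases hj : j = i
    · exact ⟨1, by simp, by simp, fun h => absurd hj h⟩
    · obtain ⟨ℓ, hℓ, hi, hj'⟩ :=
        exists_totalDegree_le_one_eval_eq_one_eval_eq_zero (hv.ne (Ne.symm hj))
      exact ⟨ℓ, hℓ, hi, fun _ => hj'⟩
  choose ℓ hℓdeg hℓi hℓj using hsep
  refine ⟨∏ j ∈ univ.erase i, ℓ j, ?_, fun j => ?_⟩
  · calc (∏ j ∈ univ.erase i, ℓ j).totalDegree ≤ ∑ j ∈ univ.erase i, (ℓ j).totalDegree :=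
          totalDegree_finsetProd _ _
      _ ≤ ∑ _j ∈ univ.erase i, 1 := sum_le_sum fun j _ => hℓdeg j
      _ = Fintype.card ι - 1 := by simp [card_erase_of_mem]
  · rw [map_prod]
    split_ifs with hj
    · subst hj
      exact prod_eq_one fun j _ => hℓi j
    · exact prod_eq_zero (mem_erase.mpr ⟨hj, mem_univ j⟩) (hℓj j hj)

theorem map_evalAtₗ_restrictTotalDegree_eq_top [Fintype ι] {v : ι → σ → K}
    (hv : Function.Injective v) {n : ℕ} (hn : Fintype.card ι ≤ n + 1) :
    (restrictTotalDegree σ K n).map (evalAtₗ v) = ⊤ := by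
  classical
  choose f hfdeg hfeval using exists_totalDegree_le_eval_eq_ite hv
  refine Submodule.eq_top_iff'.mpr fun w => ⟨∑ i, w i • f i, ?_, funext fun j => ?_⟩
  · refine (mem_restrictTotalDegree _ _ _).mpr ((totalDegree_finsetSum _ _).trans ?_)
    exact Finset.sup_le fun i _ => (totalDegree_smul_le _ _).trans ((hfdeg i).trans (by omega))
  · simp [hfeval]

theorem exists_ne_zero_totalDegree_le_forall_eval_eq_zero [Finite σ] [Fintype ι]
    (v : ι → σ → K) {n : ℕ} (h : Fintype.card ι < finrank K (restrictTotalDegree σ K n)) :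
    ∃ p : MvPolynomial σ K, p ≠ 0 ∧ p.totalDegree ≤ n ∧ ∀ i, eval (v i) p = 0 := by
  have hker := LinearMap.ker_ne_bot_of_finrank_lt
    (f := (evalAtₗ v).domRestrict (restrictTotalDegree σ K n)) (by simpa using h)
  obtain ⟨⟨p, hp⟩, hpker, hp0⟩ := (Submodule.ne_bot_iff _).mp hker
  refine ⟨p, fun h => hp0 (Subtype.ext h), (mem_restrictTotalDegree _ _ _).mp hp, fun i => ?_⟩
  simpa using congrFun hpker i

theorem map_mulLeft_restrictTotalDegree_le (a : MvPolynomial σ K) (j : ℕ) :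
    (restrictTotalDegree σ K j).map (LinearMap.mulLeft K a) ≤
      restrictTotalDegree σ K (a.totalDegree + j) := by
  rintro _ ⟨b, hb, rfl⟩
  rw [SetLike.mem_coe, mem_restrictTotalDegree] at hb
  rw [mem_restrictTotalDegree, LinearMap.mulLeft_apply]
  exact (totalDegree_mul a b).trans (by omega)

theorem finrank_map_mulLeft {a : MvPolynomial σ K} (ha : a ≠ 0)
    (U : Submodule K (MvPolynomial σ K)) :
    finrank K (U.map (LinearMap.mulLeft K a)) = finrank K U :=
  (Submodule.equivMapOfInjective _ (mul_right_injective₀ ha) U).finrank_eq.symm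

theorem map_mulLeft_inf_map_mulLeft_le
    {g p : MvPolynomial σ K} (hg : g ≠ 0) (hgp : IsRelPrime g p) (i j : ℕ) :
    (restrictTotalDegree σ K i).map (LinearMap.mulLeft K g) ⊓
        (restrictTotalDegree σ K (g.totalDegree + j)).map (LinearMap.mulLeft K p) ≤
      (restrictTotalDegree σ K j).map (LinearMap.mulLeft K (g * p)) := by
  rintro x ⟨⟨a, -, rfl⟩, ⟨b, hb, hab⟩⟩
  simp only [LinearMap.mulLeft_apply, SetLike.mem_coe, mem_restrictTotalDegree] at hab hb ⊢
  obtain ⟨c, rfl⟩ := hgp.dvd_of_dvd_mul_left ⟨a, hab⟩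
  refine ⟨c, ?_, by rw [LinearMap.mulLeft_apply, ← hab]; ring⟩
  rw [SetLike.mem_coe, mem_restrictTotalDegree]
  rcases eq_or_ne c 0 with rfl | hc
  · simp
  · rw [totalDegree_mul_of_isDomain hg hc] at hb
    omega

theorem add_two_choose_two_mul_two (j : ℕ) : (j + 2).choose 2 * 2 = (j + 2) * (j + 1) := by
  simpa using (Nat.add_one_mul_choose_eq (j + 1) 1).symm

theorem card_le_totalDegree_mul_totalDegree [Fintype ι] {g p : MvPolynomial (Fin 2) K}
    (hg : g ≠ 0) (hp : p ≠ 0) (hgp : IsRelPrime g p) {v : ι → Fin 2 → K}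
    (hv : Function.Injective v) (hvg : ∀ i, eval (v i) g = 0) (hvp : ∀ i, eval (v i) p = 0) :
    Fintype.card ι ≤ g.totalDegree * p.totalDegree := by
  set m := g.totalDegree
  set d := p.totalDegree
  set k := Fintype.card ι
  have hW (j : ℕ) : finrank K (restrictTotalDegree (Fin 2) K j) = (j + 2).choose 2 := by
    simp [finrank_restrictTotalDegree]
  set U₁ := (restrictTotalDegree (Fin 2) K (d + k)).map (LinearMap.mulLeft K g)
  set U₂ := (restrictTotalDegree (Fin 2) K (m + k)).map (LinearMap.mulLeft K p)
  have hU₁ : finrank K U₁ = (d + k + 2).choose 2 := by rw [finrank_map_mulLeft hg, hW]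
  have hU₂ : finrank K U₂ = (m + k + 2).choose 2 := by rw [finrank_map_mulLeft hp, hW]
  have hinf : finrank K ↥(U₁ ⊓ U₂) ≤ (k + 2).choose 2 := by
    refine (Submodule.finrank_mono (map_mulLeft_inf_map_mulLeft_le hg hgp _ _)).trans_eq ?_
    rw [finrank_map_mulLeft (mul_ne_zero hg hp), hW]
  have hsup : finrank K ↥(U₁ ⊔ U₂) + k ≤ (m + d + k + 2).choose 2 := by
    have hker : U₁ ⊔ U₂ ≤ LinearMap.ker (evalAtₗ v) := by
      rintro x hx
      obtain ⟨_, ⟨a, -, rfl⟩, _, ⟨b, -, rfl⟩, rfl⟩ := Submodule.mem_sup.mp hx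
      ext i
      simp [hvg, hvp]
    have hle : U₁ ⊔ U₂ ≤ restrictTotalDegree (Fin 2) K (m + d + k) :=
      sup_le ((map_mulLeft_restrictTotalDegree_le _ _).trans_eq (by congr 1; omega))
        ((map_mulLeft_restrictTotalDegree_le _ _).trans_eq (by congr 1; omega))
    simpa [hW] using Submodule.finrank_add_finrank_le_of_le_ker (evalAtₗ v) hle hker
      (map_evalAtₗ_restrictTotalDegree_eq_top hv (by omega))
  have hdim := Submodule.finrank_sup_add_finrank_inf_eq U₁ U₂
  have hcount : (m + d + k + 2).choose 2 + (k + 2).choose 2 =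
      (d + k + 2).choose 2 + (m + k + 2).choose 2 + m * d := by
    refine Nat.eq_of_mul_eq_mul_right two_pos ?_
    simp only [add_mul, add_two_choose_two_mul_two]
    ring
  omega

end Polynomials

theorem add_one_le_rpow_of_sq_add_le {x c α : ℝ} (hx : 0 < x) (hα1 : 1 ≤ α) (hα2 : α < 2)
    (h : x ^ 2 + 3 * x ≤ c * x ^ α) : x + 1 ≤ c ^ (1 / (2 - α)) := by
  have hxα : 0 < x ^ α := Real.rpow_pos_of_pos hx α
  have hc : 0 < c := pos_of_mul_pos_left (by nlinarith : 0 < c * x ^ α) hxα.le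
  have hsplit : x ^ (2 - α) * x ^ α = x ^ 2 := by
    rw [← Real.rpow_add hx, sub_add_cancel, Real.rpow_two]
  have hbern : (1 + x⁻¹) ^ (2 - α) ≤ 1 + (2 - α) * x⁻¹ :=
    rpow_one_add_le_one_add_mul_self (by linarith [inv_pos.mpr hx]) (by linarith) (by linarith)
  have hpow : (x + 1) ^ (2 - α) ≤ c := by
    refine le_of_mul_le_mul_right ?_ hxα
    calc (x + 1) ^ (2 - α) * x ^ α = x ^ 2 * (1 + x⁻¹) ^ (2 - α) := by
          rw [show x + 1 = x * (1 + x⁻¹) by field_simp, Real.mul_rpow hx.le (by positivity),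
            ← hsplit]
          ring
      _ ≤ x ^ 2 * (1 + (2 - α) * x⁻¹) := by gcongr
      _ = x ^ 2 + (2 - α) * x := by field_simp
      _ ≤ c * x ^ α := by nlinarith
  rw [one_div, Real.le_rpow_inv_iff_of_pos (by positivity) hc.le (by linarith)]
  exact hpow

section PlaneCurves

variable {K : Type*}

def planePoint (x : K × K) : Fin 2 → K := fun i => if i = 0 then x.1 else x.2

theorem planePoint_injective : Function.Injective (planePoint (K := K)) := fun x y h =>
  Prod.ext (by simpa [planePoint] using congrFun h 0) (by simpa [planePoint] using congrFun h 1)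

variable [Field K]

def planeZeroSet (p : MvPolynomial (Fin 2) K) : Set (K × K) := {x | eval (planePoint x) p = 0}

theorem planeZeroSet_subset_of_dvd {g p : MvPolynomial (Fin 2) K} (h : g ∣ p) :
    planeZeroSet g ⊆ planeZeroSet p := by
  obtain ⟨q, rfl⟩ := h
  intro x hx
  simp [planeZeroSet, hx.out]

theorem ncard_le_totalDegree_mul_totalDegree {g p : MvPolynomial (Fin 2) K} (hg : g ≠ 0)
    (hp : p ≠ 0) (hgp : IsRelPrime g p) {T : Set (K × K)} (hT : T.Finite)
    (hTg : T ⊆ planeZeroSet g) (hTp : T ⊆ planeZeroSet p) :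
    T.ncard ≤ g.totalDegree * p.totalDegree := by
  have := hT.fintype
  rw [Set.ncard_eq_toFinset_card', Set.toFinset_card]
  exact card_le_totalDegree_mul_totalDegree hg hp hgp
    (planePoint_injective.comp Subtype.val_injective) (fun x => hTg x.2) (fun x => hTp x.2)

end PlaneCurves

section IncidenceBound

variable {K : Type*} [Field K] {S : Set (K × K)}

theorem irreducible_of_forall_totalDegree_lt (hS : S.Infinite)
    (hfin : ∀ q : MvPolynomial (Fin 2) K, 0 < q.totalDegree → ¬ S ⊆ planeZeroSet q →
      (S ∩ planeZeroSet q).Finite)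
    {g : MvPolynomial (Fin 2) K} (hg : g ≠ 0) (hSg : S ⊆ planeZeroSet g)
    (hmin : ∀ q ≠ 0, q.totalDegree < g.totalDegree → ¬ S ⊆ planeZeroSet q) :
    Irreducible g := by
  obtain ⟨x₀, hx₀⟩ := hS.nonempty
  refine ⟨fun hu => (hu.map (eval (planePoint x₀))).ne_zero (hSg hx₀), fun a b hab => ?_⟩
  subst hab
  by_contra! hab
  have ha := left_ne_zero_of_mul hg
  have hb := right_ne_zero_of_mul hg
  have hdeg := totalDegree_mul_of_isDomain ha hb
  have hfa := hfin a (totalDegree_pos_of_not_isUnit ha hab.1)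
    (hmin a ha (by linarith [totalDegree_pos_of_not_isUnit hb hab.2]))
  have hfb := hfin b (totalDegree_pos_of_not_isUnit hb hab.2)
    (hmin b hb (by linarith [totalDegree_pos_of_not_isUnit ha hab.1]))
  refine hS ((hfa.union hfb).subset fun x hx => ?_)
  have hx' : eval (planePoint x) a * eval (planePoint x) b = 0 := by
    simpa [planeZeroSet] using hSg hx
  rcases mul_eq_zero.mp hx' with h | h
  · exact Or.inl ⟨hx, h⟩
  · exact Or.inr ⟨hx, h⟩

def IncidenceBound (S : Set (K × K)) (A α : ℝ) : Prop :=
  ∀ p : MvPolynomial (Fin 2) K, 0 < p.totalDegree → ¬ S ⊆ planeZeroSet p →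
    (S ∩ planeZeroSet p).Finite ∧ ((S ∩ planeZeroSet p).ncard : ℝ) ≤ A * p.totalDegree ^ α

theorem IncidenceBound.sq_add_three_mul_le {A α : ℝ} (hbound : IncidenceBound S A α)
    (hS : S.Infinite) (hA : 0 ≤ A) (hα : 0 ≤ α) {n : ℕ} (hn : 1 ≤ n)
    (hnone : ∀ p : MvPolynomial (Fin 2) K, p ≠ 0 → p.totalDegree ≤ n → ¬ S ⊆ planeZeroSet p) :
    (n : ℝ) ^ 2 + 3 * n ≤ 2 * A * n ^ α := by
  have hD := add_two_choose_two_mul_two n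
  have hD3 : 3 ≤ (n + 2).choose 2 := by nlinarith
  obtain ⟨T, hTS, hTcard⟩ := hS.exists_subset_card_eq ((n + 2).choose 2 - 1)
  obtain ⟨p, hp0, hpdeg, hpT⟩ :=
    exists_ne_zero_totalDegree_le_forall_eval_eq_zero (fun t : T => planePoint t.1)
      (n := n) (by simp [finrank_restrictTotalDegree, hTcard]; omega)
  obtain ⟨t₀, ht₀⟩ : T.Nonempty := card_pos.mp (by omega)
  obtain ⟨hfin, hcard⟩ := hbound p (totalDegree_pos_of_eval_eq_zero hp0 (hpT ⟨t₀, ht₀⟩))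
    (hnone p hp0 hpdeg)
  have hTp : (T : Set (K × K)) ⊆ S ∩ planeZeroSet p := fun t ht => ⟨hTS ht, hpT ⟨t, ht⟩⟩
  have hTle : (((n + 2).choose 2 - 1 : ℕ) : ℝ) ≤ (S ∩ planeZeroSet p).ncard := by
    rw [← hTcard, ← Set.ncard_coe_finset]
    exact_mod_cast Set.ncard_le_ncard hTp hfin
  have hsum : (((n + 2).choose 2 - 1 : ℕ) : ℝ) * 2 = n ^ 2 + 3 * n := by
    have : ((n + 2).choose 2 - 1) * 2 = n ^ 2 + 3 * n := by rw [Nat.sub_mul, hD]; ring_nf; omega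
    exact_mod_cast this
  have hmono : (p.totalDegree : ℝ) ^ α ≤ (n : ℝ) ^ α := by gcongr
  nlinarith

theorem IncidenceBound.add_one_le_rpow {A α : ℝ} (hbound : IncidenceBound S A α)
    (hS : S.Infinite) (hA : 0 ≤ A) (hα1 : 1 ≤ α) (hα2 : α < 2) {n : ℕ} (hn : 1 ≤ n)
    (hnone : ∀ p : MvPolynomial (Fin 2) K, p ≠ 0 → p.totalDegree ≤ n → ¬ S ⊆ planeZeroSet p) :
    (n : ℝ) + 1 ≤ (2 * A) ^ (1 / (2 - α)) :=
  add_one_le_rpow_of_sq_add_le (by exact_mod_cast hn) hα1 hα2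
    (hbound.sq_add_three_mul_le hS hA (by linarith) hn hnone)

theorem IncidenceBound.exists_subset_planeZeroSet {A α : ℝ} (hbound : IncidenceBound S A α)
    (hS : S.Infinite) (hA : 0 ≤ A) (hα1 : 1 ≤ α) (hα2 : α < 2) :
    ∃ n : ℕ, ∃ p : MvPolynomial (Fin 2) K, p ≠ 0 ∧ p.totalDegree ≤ n ∧ S ⊆ planeZeroSet p := by
  by_contra! hnone
  set B := (2 * A) ^ (1 / (2 - α))
  have := hbound.add_one_le_rpow hS hA hα1 hα2 (n := ⌈B⌉₊ + 1) (by omega) (hnone _)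
  push_cast at this
  linarith [Nat.le_ceil B]

end IncidenceBound

/-- If `S ⊆ ℂ²` is infinite and there are constants `A ≥ 1`, `1 ≤ α < 2` with
`|S ∩ X| ≤ A (deg X)^α` for every algebraic curve `X` not containing `S`, then `S` is
contained in an irreducible algebraic curve `Γ` of degree at most `(2A)^{1/(2-α)}`, and
`|S ∩ X| ≤ (2A)^{1/(2-α)} · deg X` for every algebraic curve `X` not containing `S`. -/
theorem stmt_5 (S : Set (ℂ × ℂ)) (hS : S.Infinite) (A α : ℝ) (hA : 1 ≤ A)
    (hα1 : 1 ≤ α) (hα2 : α < 2)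
    (hbound : ∀ p : MvPolynomial (Fin 2) ℂ, 0 < p.totalDegree →
      ¬ S ⊆ {x : ℂ × ℂ | MvPolynomial.eval (fun i : Fin 2 => if i = 0 then x.1 else x.2) p = 0} →
      (S ∩ {x : ℂ × ℂ | MvPolynomial.eval (fun i : Fin 2 => if i = 0 then x.1 else x.2) p = 0}).Finite ∧
      ((S ∩ {x : ℂ × ℂ | MvPolynomial.eval (fun i : Fin 2 => if i = 0 then x.1 else x.2) p = 0}).ncard : ℝ) ≤
        A * (p.totalDegree : ℝ) ^ α) :
    (∃ g : MvPolynomial (Fin 2) ℂ, Irreducible g ∧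
      (g.totalDegree : ℝ) ≤ (2 * A) ^ (1 / (2 - α)) ∧
      S ⊆ {x : ℂ × ℂ | MvPolynomial.eval (fun i : Fin 2 => if i = 0 then x.1 else x.2) g = 0}) ∧
    ∀ p : MvPolynomial (Fin 2) ℂ, 0 < p.totalDegree →
      ¬ S ⊆ {x : ℂ × ℂ | MvPolynomial.eval (fun i : Fin 2 => if i = 0 then x.1 else x.2) p = 0} →
      (S ∩ {x : ℂ × ℂ | MvPolynomial.eval (fun i : Fin 2 => if i = 0 then x.1 else x.2) p = 0}).Finite ∧
      ((S ∩ {x : ℂ × ℂ | MvPolynomial.eval (fun i : Fin 2 => if i = 0 then x.1 else x.2) p = 0}).ncard : ℝ) ≤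
        (2 * A) ^ (1 / (2 - α)) * (p.totalDegree : ℝ) := by
  change IncidenceBound S A α at hbound
  change (∃ g, _ ∧ _ ∧ S ⊆ planeZeroSet g) ∧ ∀ p, _ → ¬ S ⊆ planeZeroSet p → _
  set B := (2 * A) ^ (1 / (2 - α))
  classical
  have hex := hbound.exists_subset_planeZeroSet hS (by linarith) hα1 hα2
  obtain ⟨g, hg0, hgdeg, hSg⟩ := Nat.find_spec hex
  have hmin : ∀ q ≠ 0, q.totalDegree < g.totalDegree → ¬ S ⊆ planeZeroSet q :=
    fun q hq hlt hSq => Nat.find_min hex (hlt.trans_le hgdeg) ⟨q, hq, le_rfl, hSq⟩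
  have hg := irreducible_of_forall_totalDegree_lt hS (fun q hq hSq => (hbound q hq hSq).1) hg0
    hSg hmin
  have hgB : (g.totalDegree : ℝ) ≤ B := by
    obtain ⟨n, hn⟩ := Nat.exists_eq_add_one.mpr (totalDegree_pos_of_not_isUnit hg0 hg.not_isUnit)
    rcases n.eq_zero_or_pos with rfl | hn1
    · rw [hn, Nat.cast_one]
      exact Real.one_le_rpow (by linarith) (one_div_nonneg.mpr (by linarith))
    · rw [hn, Nat.cast_add_one]
      exact hbound.add_one_le_rpow hS (by linarith) hα1 hα2 hn1 fun q hq _ => hmin q hq (by omega)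
  refine ⟨⟨g, hg, hgB, hSg⟩, fun p hp hSp => ⟨(hbound p hp hSp).1, ?_⟩⟩
  have hgp : IsRelPrime g p := hg.isRelPrime_iff_not_dvd.mpr fun hdvd =>
    hSp (hSg.trans (planeZeroSet_subset_of_dvd hdvd))
  calc ((S ∩ planeZeroSet p).ncard : ℝ) ≤ g.totalDegree * p.totalDegree := by
        exact_mod_cast ncard_le_totalDegree_mul_totalDegree hg0 (by rintro rfl; simp at hp) hgp
          (hbound p hp hSp).1 (Set.inter_subset_left.trans hSg) Set.inter_subset_right
    _ ≤ B * p.totalDegree := by gcongr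
end

section
/- Let g be holomorphic on a neighborhood of the closed disk of radius s, and suppose g has at least N zeros (counted with multiplicity) in the closed disk of radius r, where 0 < r < s. Then max_{|z|=r}|g(z)| ≤ max_{|z|=s}|g(z)| · (2rs/(r²+s²))^N. -/
/-!
Multiply the cofactor `h` by the reflected factors `s² - z̄ᵢ w`, which on `|w| = s` have modulus
`s |w - zᵢ|`. The maximum principle bounds the resulting holomorphic function on `|w| ≤ s` by
`s^N max_{|ζ|=s} |g ζ|`, and on `|w| = r` each quotient `|w - zᵢ| / |s² - z̄ᵢ w|` is at most
`2r / (r² + s²)`.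
-/

open Metric ComplexConjugate Finset

namespace Complex

theorem norm_sq_sub_conj_mul_of_norm_eq {s : ℝ} {ζ : ℂ} (hζ : ‖ζ‖ = s) (a : ℂ) :
    ‖(s : ℂ) ^ 2 - conj a * ζ‖ = s * ‖ζ - a‖ := by
  have hs : (s : ℂ) ^ 2 = ζ * conj ζ := by rw [mul_conj, normSq_eq_norm_sq, hζ]; push_cast; ring
  rw [hs, show ζ * conj ζ - conj a * ζ = ζ * conj (ζ - a) by rw [map_sub]; ring, norm_mul,
    norm_conj, hζ]

theorem norm_sub_le_mul_norm_sq_sub_conj_mul {r s : ℝ} (hr : 0 < r) (hrs : r < s) {a w : ℂ}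
    (ha : ‖a‖ ≤ r) (hw : ‖w‖ = r) :
    ‖w - a‖ ≤ 2 * r / (r ^ 2 + s ^ 2) * ‖(s : ℂ) ^ 2 - conj a * w‖ := by
  set t := (w * conj a).re
  have ht : -(r * ‖a‖) ≤ t := by
    have := (abs_le.1 (abs_re_le_norm (w * conj a))).1
    rwa [norm_mul, norm_conj, hw] at this
  have hnum : ‖w - a‖ ^ 2 = r ^ 2 + ‖a‖ ^ 2 - 2 * t := by
    rw [Complex.sq_norm, normSq_sub, normSq_eq_norm_sq, normSq_eq_norm_sq, hw]
  have hden : ‖(s : ℂ) ^ 2 - conj a * w‖ ^ 2 = s ^ 4 + r ^ 2 * ‖a‖ ^ 2 - 2 * s ^ 2 * t := by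
    rw [Complex.sq_norm, normSq_sub, normSq_eq_norm_sq, normSq_eq_norm_sq, ← ofReal_pow,
      re_ofReal_mul, norm_mul, norm_conj, hw, norm_real, Real.norm_eq_abs, abs_sq]
    simp only [t, map_mul, conj_conj, mul_re, conj_re, conj_im]
    ring
  rw [← pow_le_pow_iff_left₀ (norm_nonneg _) (by positivity) two_ne_zero, mul_pow, hnum, hden,
    div_pow, div_mul_eq_mul_div, le_div_iff₀ (by positivity)]
  -- the difference is linear in `t` with slope `2 (s² - r²)²`, and at `t = -r‖a‖` it factors
  nlinarith [mul_nonneg (sq_nonneg (s ^ 2 - r ^ 2)) (neg_le_iff_add_nonneg.1 ht),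
    mul_nonneg (mul_nonneg (sub_nonneg.2 ha) (sub_nonneg.2 (pow_le_pow_left₀ hr.le hrs.le 2)))
      (by positivity : 0 ≤ 2 * r * (s ^ 2 + r * ‖a‖) + (r ^ 2 + s ^ 2) * (r + ‖a‖))]

theorem norm_mul_prod_sq_sub_conj_mul_le {ι : Type*} [Fintype ι] {s M : ℝ} (hs : 0 < s)
    {h : ℂ → ℂ} (hh : DifferentiableOn ℂ h (closedBall 0 s)) (z : ι → ℂ)
    (hM : ∀ ζ ∈ sphere (0 : ℂ) s, ‖(∏ i, (ζ - z i)) * h ζ‖ ≤ M) {w : ℂ}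
    (hw : w ∈ closedBall (0 : ℂ) s) :
    ‖h w * ∏ i, ((s : ℂ) ^ 2 - conj (z i) * w)‖ ≤ s ^ Fintype.card ι * M := by
  have hd : DiffContOnCl ℂ (fun x => h x * ∏ i, ((s : ℂ) ^ 2 - conj (z i) * x)) (ball 0 s) := by
    refine DifferentiableOn.diffContOnCl ?_
    rw [closure_ball 0 hs.ne']
    exact hh.mul (DifferentiableOn.fun_finsetProd fun i _ => by fun_prop)
  refine norm_le_of_forall_mem_frontier_norm_le isBounded_ball hd (fun ζ hζ => ?_)
    (by rwa [closure_ball 0 hs.ne'])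
  rw [frontier_ball 0 hs.ne'] at hζ
  have hζs : ‖ζ‖ = s := mem_sphere_zero_iff_norm.1 hζ
  calc ‖h ζ * ∏ i, ((s : ℂ) ^ 2 - conj (z i) * ζ)‖
      = s ^ Fintype.card ι * ‖(∏ i, (ζ - z i)) * h ζ‖ := by
        simp only [norm_mul, norm_prod, norm_sq_sub_conj_mul_of_norm_eq hζs, prod_mul_distrib,
          prod_const, card_univ]
        ring
    _ ≤ s ^ Fintype.card ι * M := by gcongr; exact hM ζ hζ

end Complex

open Complex in
theorem stmt_9_general (g : ℂ → ℂ) (r s : ℝ) (N : ℕ) (hr0 : 0 < r) (hrs : r < s)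
    (U : Set ℂ) (hUs : closedBall (0 : ℂ) s ⊆ U)
    (hg : DifferentiableOn ℂ g U)
    (z : Fin N → ℂ) (hz : ∀ i, z i ∈ closedBall (0 : ℂ) r)
    (h : ℂ → ℂ) (hh : DifferentiableOn ℂ h U)
    (hfact : ∀ w ∈ U, g w = (∏ i, (w - z i)) * h w) :
    ∀ w ∈ sphere (0 : ℂ) r,
      ‖g w‖ ≤ sSup ((fun ζ => ‖g ζ‖) '' sphere (0 : ℂ) s) *
        (2 * r * s / (r ^ 2 + s ^ 2)) ^ N := by
  intro w hw
  have hsU : sphere (0 : ℂ) s ⊆ U := sphere_subset_closedBall.trans hUs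
  have hwU : w ∈ closedBall (0 : ℂ) s :=
    closedBall_subset_closedBall hrs.le (sphere_subset_closedBall hw)
  set M := sSup ((fun ζ => ‖g ζ‖) '' sphere (0 : ℂ) s)
  have hgM : ∀ ζ ∈ sphere (0 : ℂ) s, ‖(∏ i, (ζ - z i)) * h ζ‖ ≤ M := fun ζ hζ => by
    rw [← hfact ζ (hsU hζ)]
    exact le_csSup ((isCompact_sphere 0 s).bddAbove_image (hg.mono hsU).continuousOn.norm)
      (Set.mem_image_of_mem _ hζ)
  have hmax := norm_mul_prod_sq_sub_conj_mul_le (hr0.trans hrs) (hh.mono hUs) z hgM hwU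
  rw [Fintype.card_fin] at hmax
  calc ‖g w‖ = (∏ i, ‖w - z i‖) * ‖h w‖ := by rw [hfact w (hUs hwU), norm_mul, norm_prod]
    _ ≤ (∏ i, (2 * r / (r ^ 2 + s ^ 2) * ‖(s : ℂ) ^ 2 - conj (z i) * w‖)) * ‖h w‖ := by
        gcongr with i
        exact norm_sub_le_mul_norm_sq_sub_conj_mul hr0 hrs (mem_closedBall_zero_iff.1 (hz i))
          (mem_sphere_zero_iff_norm.1 hw)
    _ = (2 * r / (r ^ 2 + s ^ 2)) ^ N * ‖h w * ∏ i, ((s : ℂ) ^ 2 - conj (z i) * w)‖ := by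
        rw [prod_mul_distrib, prod_const, card_univ, Fintype.card_fin, norm_mul, norm_prod]
        ring
    _ ≤ (2 * r / (r ^ 2 + s ^ 2)) ^ N * (s ^ N * M) := by gcongr
    _ = M * (2 * r * s / (r ^ 2 + s ^ 2)) ^ N := by rw [mul_div_right_comm, mul_pow]; ring

/-- If `g` is holomorphic on a neighborhood `U` of the closed disk of radius `s` and has
at least `N` zeros, counted with multiplicity, in the closed disk of radius `r < s`
(encoded: `g(w) = ∏ᵢ (w - zᵢ) · h(w)` with `h` holomorphic on `U` and `|zᵢ| ≤ r`), then
`max_{|z|=r} |g z| ≤ max_{|z|=s} |g z| · (2rs/(r²+s²))^N`. -/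
theorem stmt_9 (g : ℂ → ℂ) (r s : ℝ) (N : ℕ) (hr0 : 0 < r) (hrs : r < s)
    (U : Set ℂ) (hU : IsOpen U) (hUs : closedBall (0 : ℂ) s ⊆ U)
    (hg : DifferentiableOn ℂ g U)
    (z : Fin N → ℂ) (hz : ∀ i, z i ∈ closedBall (0 : ℂ) r)
    (h : ℂ → ℂ) (hh : DifferentiableOn ℂ h U)
    (hfact : ∀ w ∈ U, g w = (∏ i, (w - z i)) * h w) :
    ∀ w ∈ sphere (0 : ℂ) r,
      ‖g w‖ ≤ sSup ((fun ζ => ‖g ζ‖) '' sphere (0 : ℂ) s) *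
        (2 * r * s / (r ^ 2 + s ^ 2)) ^ N :=
  stmt_9_general g r s N hr0 hrs U hUs hg z hz h hh hfact
end
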